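/- arXiv:0806.0250 — 8 statements merged into one kernel-verified Lean document; each statement's English description precedes it below -/
import Mathlib

section
/- Let T be a linear order and t0 ∈ T, and suppose the predicates insulin, su, bg, uptakeL, uptakeP, releaseL, secretion, capS, capN, capE, qiHigh, normo, hypo, hyper : T → Prop satisfy all axioms of the diabetes background knowledge B_DM2. If capN t0, (H hyper) t0, (G su) t0 and (G bg) t0 all hold, then (G normo) t0 holds, i.e., ∀ t' ≥ t0, normo t'. -/
def BDM2 {T : Type*} [LinearOrder T]
    (insulin su bg uptakeL uptakeP releaseL secretion capS capN capE qiHigh normo hypo hyper : T → Prop) : Prop :=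
  (∀ t : T, (∀ t' ≥ t, insulin t') → ∀ t' ≥ t, uptakeL t' ∧ uptakeP t') ∧
  (∀ t : T, ∀ t' ≥ t, uptakeL t' → ¬ releaseL t') ∧
  (∀ t : T, ((∀ t' ≥ t, su t') ∧ ¬ capE t) → ∀ t' ≥ t, secretion t') ∧
  (∀ t : T, (∀ t' ≥ t, bg t') → ∀ t' ≥ t, ¬ releaseL t') ∧
  (∀ t : T, ((∀ t' ≥ t, secretion t') ∧ capS t ∧ ¬ qiHigh t ∧ (∀ t' < t, hyper t')) →
    ∀ t' ≥ t, normo t') ∧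
  (∀ t : T, ((∀ t' ≥ t, ¬ releaseL t') ∧ capS t ∧ qiHigh t ∧ (∀ t' < t, hyper t')) →
    ∀ t' ≥ t, normo t') ∧
  (∀ t : T, (((∀ t' ≥ t, ¬ releaseL t') ∨ (∀ t' ≥ t, uptakeP t')) ∧ capN t ∧
      (∀ t' ≥ t, secretion t') ∧ (∀ t' < t, hyper t')) → ∀ t' ≥ t, normo t') ∧
  (∀ t : T, ((∀ t' ≥ t, uptakeL t') ∧ (∀ t' ≥ t, uptakeP t') ∧ capE t ∧
      (∀ t' < t, hyper t')) → ∀ t' ≥ t, normo t' ∨ hypo t') ∧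
  (∀ t : T, (normo t ∨ hypo t ∨ hyper t) ∧ ¬(normo t ∧ hypo t) ∧
    ¬(normo t ∧ hyper t) ∧ ¬(hypo t ∧ hyper t)) ∧
  (∀ t : T, ¬(capS t ∧ capN t) ∧ ¬(capS t ∧ capE t) ∧ ¬(capN t ∧ capE t))

theorem stmt0 {T : Type*} [LinearOrder T] (t0 : T)
    (insulin su bg uptakeL uptakeP releaseL secretion capS capN capE qiHigh normo hypo hyper : T → Prop)
    (hB : BDM2 insulin su bg uptakeL uptakeP releaseL secretion capS capN capE qiHigh normo hypo hyper)
    (hcapN : capN t0)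
    (hH : ∀ t' < t0, hyper t')
    (hsu : ∀ t' ≥ t0, su t')
    (hbg : ∀ t' ≥ t0, bg t') :
    ∀ t' ≥ t0, normo t' := by
  obtain ⟨a1,a2,a3,a4,a5,a6,a7,a8,a9,a10⟩ := hB
  have hnE : ¬ capE t0 := fun h => (a10 t0).2.2 ⟨hcapN, h⟩
  have hsec := a3 t0 ⟨hsu, hnE⟩
  have hnr := a4 t0 hbg
  exact a7 t0 ⟨Or.inl hnr, hcapN, hsec, hH⟩
end

section
/- Let T be a linear order and t0 ∈ T, and suppose the predicates insulin, su, bg, uptakeL, uptakeP, releaseL, secretion, capS, capN, capE, qiHigh, normo, hypo, hyper : T → Prop satisfy all axioms of the diabetes background knowledge B_DM2. If capE t0, (H hyper) t0, (G su) t0, (G bg) t0 and (G insulin) t0 all hold, then ∀ t' ≥ t0, normo t' ∨ hypo t'. -/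
theorem stmt1 {T : Type*} [LinearOrder T] (t0 : T)
    (insulin su bg uptakeL uptakeP releaseL secretion capS capN capE qiHigh normo hypo hyper : T → Prop)
    (hB : BDM2 insulin su bg uptakeL uptakeP releaseL secretion capS capN capE qiHigh normo hypo hyper)
    (hcapE : capE t0)
    (hH : ∀ t' < t0, hyper t')
    (hsu : ∀ t' ≥ t0, su t')
    (hbg : ∀ t' ≥ t0, bg t')
    (hins : ∀ t' ≥ t0, insulin t') :
    ∀ t' ≥ t0, normo t' ∨ hypo t' := by
  obtain ⟨h1, h2, h3, h4, h5, h6, h7, h8, h9, h10⟩ := hB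
  have hup := h1 t0 hins
  exact h8 t0 ⟨fun t' ht' => (hup t' ht').1, fun t' ht' => (hup t' ht').2, hcapE, hH⟩
end

section
/- Let T be a linear order and t0 ∈ T, and suppose the predicates insulin, su, bg, uptakeL, uptakeP, releaseL, secretion, capS, capN, capE, qiHigh, normo, hypo, hyper : T → Prop satisfy all axioms of the diabetes background knowledge B_DM2. If capE t0, (H hyper) t0 and (G insulin) t0 hold (i.e., insulin alone is prescribed), then ∀ t' ≥ t0, normo t' ∨ hypo t'. -/
theorem stmt2 {T : Type*} [LinearOrder T] (t0 : T)
    (insulin su bg uptakeL uptakeP releaseL secretion capS capN capE qiHigh normo hypo hyper : T → Prop)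
    (hB : BDM2 insulin su bg uptakeL uptakeP releaseL secretion capS capN capE qiHigh normo hypo hyper)
    (hcapE : capE t0)
    (hH : ∀ t' < t0, hyper t')
    (hins : ∀ t' ≥ t0, insulin t') :
    ∀ t' ≥ t0, normo t' ∨ hypo t' := by
  obtain ⟨h1, h2, h3, h4, h5, h6, h7, h8, h9, h10⟩ := hB
  have hup := h1 t0 hins
  exact h8 t0 ⟨fun t' ht' => (hup t' ht').1, fun t' ht' => (hup t' ht').2, hcapE, hH⟩
end

section
/- There exist a linear order T, an element t0 ∈ T, and predicates insulin, su, bg, uptakeL, uptakeP, releaseL, secretion, capS, capN, capE, qiHigh, normo, hypo, hyper : T → Prop satisfying all axioms of the diabetes background knowledge B_DM2 together with capE t0, (H hyper) t0, (G su) t0, (G bg) t0 and (G insulin) t0. In other words, prescribing all three drugs to a patient with exhausted B cells and a history of hyperglycaemia is consistent with B_DM2 (criterion M1). -/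
def WitnessAll3 (T : Type) [LinearOrder T] (t0 : T)
    (insulin su bg uptakeL uptakeP releaseL secretion capS capN capE qiHigh normo hypo hyper : T → Prop) : Prop :=
  BDM2 insulin su bg uptakeL uptakeP releaseL secretion capS capN capE qiHigh normo hypo hyper ∧
  capE t0 ∧
  (∀ t' < t0, hyper t') ∧
  (∀ t' ≥ t0, su t') ∧
  (∀ t' ≥ t0, bg t') ∧
  (∀ t' ≥ t0, insulin t')

theorem stmt3 :
    ∃ (T : Type) (inst : LinearOrder T) (t0 : T)
    (insulin su bg uptakeL uptakeP releaseL secretion capS capN capE qiHigh normo hypo hyper : T → Prop),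
    @WitnessAll3 T inst t0 insulin su bg uptakeL uptakeP releaseL secretion capS capN capE qiHigh normo hypo hyper := by
  refine ⟨ℤ, inferInstance, 0, (fun t => 0 ≤ t), (fun t => 0 ≤ t), (fun t => 0 ≤ t),
    (fun t => 0 ≤ t), (fun t => 0 ≤ t), (fun _ => False), (fun _ => True),
    (fun _ => False), (fun _ => False), (fun _ => True), (fun _ => False),
    (fun t => 0 ≤ t), (fun _ => False), (fun t => t < 0), ?_⟩
  refine ⟨⟨?_, ?_, ?_, ?_, ?_, ?_, ?_, ?_, ?_, ?_⟩, trivial, ?_, ?_, ?_, ?_⟩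
  · exact fun t h t' ht' => ⟨h t' ht', h t' ht'⟩
  · exact fun t t' _ _ h => h
  · exact fun t _ t' _ => trivial
  · exact fun t _ t' _ h => h
  · exact fun t ⟨_, h, _⟩ => absurd h not_false
  · exact fun t ⟨_, h, _⟩ => absurd h not_false
  · exact fun t ⟨_, h, _⟩ => absurd h not_false
  · exact fun t ⟨h1, _⟩ t' ht' => Or.inl (h1 t' ht')
  · intro t
    refine ⟨?_, fun ⟨_, h⟩ => h, fun ⟨h1, h2⟩ => absurd h1 (not_le.mpr h2),
      fun ⟨h, _⟩ => h⟩
    rcases le_or_gt 0 t with h | h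
    · exact Or.inl h
    · exact Or.inr (Or.inr h)
  · exact fun t => ⟨fun ⟨h, _⟩ => h, fun ⟨h, _⟩ => h, fun ⟨h, _⟩ => h⟩
  · exact fun t' ht' => ht'
  · exact fun t' ht' => ht'
  · exact fun t' ht' => ht'
  · exact fun t' ht' => ht'
end

section
/- There exist a linear order T with exactly two elements, an element t0 ∈ T, and predicates insulin, su, bg, uptakeL, uptakeP, releaseL, secretion, capS, capN, capE, qiHigh, normo, hypo, hyper : T → Prop satisfying all axioms of the diabetes background knowledge B_DM2 together with capN t0, (H hyper) t0, (G bg) t0 and ¬((G normo) t0). In other words, for a patient with nearly exhausted B cells and a history of hyperglycaemia, prescribing a biguanide drug alone does not guarantee normoglycaemia, and this is witnessed by a countermodel with a two-element time domain. -/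
def WitnessBgOnlyTwo (T : Type) [LinearOrder T] (t0 : T)
    (insulin su bg uptakeL uptakeP releaseL secretion capS capN capE qiHigh normo hypo hyper : T → Prop) : Prop :=
  BDM2 insulin su bg uptakeL uptakeP releaseL secretion capS capN capE qiHigh normo hypo hyper ∧
  (∃ a b : T, a ≠ b ∧ ∀ x : T, x = a ∨ x = b) ∧
  capN t0 ∧
  (∀ t' < t0, hyper t') ∧
  (∀ t' ≥ t0, bg t') ∧
  ¬ (∀ t' ≥ t0, normo t')

theorem stmt5 :
    ∃ (T : Type) (inst : LinearOrder T) (t0 : T)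
    (insulin su bg uptakeL uptakeP releaseL secretion capS capN capE qiHigh normo hypo hyper : T → Prop),
    @WitnessBgOnlyTwo T inst t0 insulin su bg uptakeL uptakeP releaseL secretion capS capN capE qiHigh normo hypo hyper := by
  refine ⟨Bool, inferInstance, false, (fun _ => False), (fun _ => False), (fun _ => True),
    (fun _ => False), (fun _ => False), (fun _ => False), (fun _ => False), (fun _ => False),
    (fun _ => True), (fun _ => False), (fun _ => False), (fun _ => False), (fun _ => False),
    (fun _ => True), ?_⟩
  refine ⟨⟨?_, ?_, ?_, ?_, ?_, ?_, ?_, ?_, ?_, ?_⟩, ⟨false, true, by simp, fun x => by cases x <;> simp⟩, trivial, ?_, ?_, ?_⟩ <;>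
    simp [BDM2]
end

section
/- There exist a linear order T, an element t0 ∈ T, and predicates insulin, su, bg, uptakeL, uptakeP, releaseL, secretion, capS, capN, capE, qiHigh, normo, hypo, hyper : T → Prop satisfying all axioms of the diabetes background knowledge B_DM2 together with capE t0, (H hyper) t0, (G insulin) t0 and (G normo) t0. In other words, it is consistent with B_DM2 that a patient with exhausted B cells and a history of hyperglycaemia is cured (reaches normoglycaemia forever) by insulin treatment alone. -/
def WitnessInsulinCured (T : Type) [LinearOrder T] (t0 : T)
    (insulin su bg uptakeL uptakeP releaseL secretion capS capN capE qiHigh normo hypo hyper : T → Prop) : Prop :=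
  BDM2 insulin su bg uptakeL uptakeP releaseL secretion capS capN capE qiHigh normo hypo hyper ∧
  capE t0 ∧
  (∀ t' < t0, hyper t') ∧
  (∀ t' ≥ t0, insulin t') ∧
  (∀ t' ≥ t0, normo t')

theorem stmt7 :
    ∃ (T : Type) (inst : LinearOrder T) (t0 : T)
    (insulin su bg uptakeL uptakeP releaseL secretion capS capN capE qiHigh normo hypo hyper : T → Prop),
    @WitnessInsulinCured T inst t0 insulin su bg uptakeL uptakeP releaseL secretion capS capN capE qiHigh normo hypo hyper := by
  refine ⟨ℤ, inferInstance, 0, (0 ≤ ·), (fun _ => False), (fun _ => False), (0 ≤ ·), (0 ≤ ·),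
    (fun _ => False), (fun _ => False), (fun _ => False), (fun _ => False), (fun _ => True),
    (fun _ => False), (0 ≤ ·), (fun _ => False), (· < 0), ?_⟩
  refine ⟨⟨?_, ?_, ?_, ?_, ?_, ?_, ?_, ?_, ?_, ?_⟩, trivial, ?_, ?_, ?_⟩ <;>
    simp only [ge_iff_le] <;> intros <;> simp_all <;> omega
end

section
/- For the patient description P = {capN t0, (H hyper) t0} and intention N = (G normo) t0, the treatment {su, bg} is in accordance with good practice medicine, i.e., all of the following hold: (M1) there exist a linear order T, t0 ∈ T and predicates satisfying B_DM2 together with P, (G su) t0 and (G bg) t0; (M2) for every linear order T, t0 ∈ T and predicates satisfying B_DM2 together with P, (G su) t0 and (G bg) t0, the intention (G normo) t0 holds; (M3, subset minimality) for each proper subset T' of {su, bg} (namely {su}, {bg} and ∅), there exist a linear order T, t0 ∈ T and predicates satisfying B_DM2 together with P, (G d) t0 for each d ∈ T', and ¬((G normo) t0). -/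
def WitnessSuBg (T : Type) [LinearOrder T] (t0 : T)
    (insulin su bg uptakeL uptakeP releaseL secretion capS capN capE qiHigh normo hypo hyper : T → Prop) : Prop :=
  BDM2 insulin su bg uptakeL uptakeP releaseL secretion capS capN capE qiHigh normo hypo hyper ∧
  capN t0 ∧
  (∀ t' < t0, hyper t') ∧
  (∀ t' ≥ t0, su t') ∧
  (∀ t' ≥ t0, bg t')

def WitnessSuNotCured (T : Type) [LinearOrder T] (t0 : T)
    (insulin su bg uptakeL uptakeP releaseL secretion capS capN capE qiHigh normo hypo hyper : T → Prop) : Prop :=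
  BDM2 insulin su bg uptakeL uptakeP releaseL secretion capS capN capE qiHigh normo hypo hyper ∧
  capN t0 ∧
  (∀ t' < t0, hyper t') ∧
  (∀ t' ≥ t0, su t') ∧
  ¬ (∀ t' ≥ t0, normo t')

def WitnessBgNotCured (T : Type) [LinearOrder T] (t0 : T)
    (insulin su bg uptakeL uptakeP releaseL secretion capS capN capE qiHigh normo hypo hyper : T → Prop) : Prop :=
  BDM2 insulin su bg uptakeL uptakeP releaseL secretion capS capN capE qiHigh normo hypo hyper ∧
  capN t0 ∧
  (∀ t' < t0, hyper t') ∧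
  (∀ t' ≥ t0, bg t') ∧
  ¬ (∀ t' ≥ t0, normo t')

def WitnessEmptyNotCured (T : Type) [LinearOrder T] (t0 : T)
    (insulin su bg uptakeL uptakeP releaseL secretion capS capN capE qiHigh normo hypo hyper : T → Prop) : Prop :=
  BDM2 insulin su bg uptakeL uptakeP releaseL secretion capS capN capE qiHigh normo hypo hyper ∧
  capN t0 ∧
  (∀ t' < t0, hyper t') ∧
  ¬ (∀ t' ≥ t0, normo t')

theorem stmt8 :
    (∃ (T : Type) (inst : LinearOrder T) (t0 : T)
    (insulin su bg uptakeL uptakeP releaseL secretion capS capN capE qiHigh normo hypo hyper : T → Prop),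
    @WitnessSuBg T inst t0 insulin su bg uptakeL uptakeP releaseL secretion capS capN capE qiHigh normo hypo hyper) ∧
    (∀ (T : Type) [LinearOrder T] (t0 : T)
      (insulin su bg uptakeL uptakeP releaseL secretion capS capN capE qiHigh normo hypo hyper : T → Prop),
      BDM2 insulin su bg uptakeL uptakeP releaseL secretion capS capN capE qiHigh normo hypo hyper →
      capN t0 → (∀ t' < t0, hyper t') → (∀ t' ≥ t0, su t') → (∀ t' ≥ t0, bg t') →
      ∀ t' ≥ t0, normo t') ∧
    (∃ (T : Type) (inst : LinearOrder T) (t0 : T)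
    (insulin su bg uptakeL uptakeP releaseL secretion capS capN capE qiHigh normo hypo hyper : T → Prop),
    @WitnessSuNotCured T inst t0 insulin su bg uptakeL uptakeP releaseL secretion capS capN capE qiHigh normo hypo hyper) ∧
    (∃ (T : Type) (inst : LinearOrder T) (t0 : T)
    (insulin su bg uptakeL uptakeP releaseL secretion capS capN capE qiHigh normo hypo hyper : T → Prop),
    @WitnessBgNotCured T inst t0 insulin su bg uptakeL uptakeP releaseL secretion capS capN capE qiHigh normo hypo hyper) ∧
    (∃ (T : Type) (inst : LinearOrder T) (t0 : T)
    (insulin su bg uptakeL uptakeP releaseL secretion capS capN capE qiHigh normo hypo hyper : T → Prop),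
    @WitnessEmptyNotCured T inst t0 insulin su bg uptakeL uptakeP releaseL secretion capS capN capE qiHigh normo hypo hyper) := by

  refine ⟨?_, ?_, ?_, ?_, ?_⟩
  · -- M1: model with everything good
    refine ⟨ℤ, inferInstance, 0, (fun _ => False), (fun _ => True), (fun _ => True),
      (fun _ => True), (fun _ => True), (fun _ => False), (fun _ => True),
      (fun _ => False), (fun t => t = 0), (fun _ => False), (fun _ => False),
      (fun t => 0 ≤ t), (fun _ => False), (fun t => t < 0), ?_⟩
    refine ⟨⟨?_, ?_, ?_, ?_, ?_, ?_, ?_, ?_, ?_, ?_⟩, rfl, ?_, ?_, ?_⟩ <;>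
      first
        | (rintro t ⟨_, rfl, _, _⟩ t' ht'; exact ht')
        | (simp <;> intros <;> omega)
  · -- M2
    rintro T _ t0 insulin su bg uptakeL uptakeP releaseL secretion capS capN capE qiHigh
      normo hypo hyper ⟨_, _, ax3, ax4, _, _, ax7, _, _, ax10⟩ hN hH hsu hbg
    have hE : ¬ capE t0 := fun h => (ax10 t0).2.2 ⟨hN, h⟩
    exact ax7 t0 ⟨Or.inl (ax4 t0 hbg), hN, ax3 t0 ⟨hsu, hE⟩, hH⟩
  · -- su only: releaseL everywhere, secretion everywhere, hyper everywhere
    refine ⟨ℤ, inferInstance, 0, (fun _ => False), (fun _ => True), (fun _ => False),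
      (fun _ => False), (fun _ => False), (fun _ => True), (fun _ => True),
      (fun _ => False), (fun t => t = 0), (fun _ => False), (fun _ => False),
      (fun _ => False), (fun _ => False), (fun _ => True), ?_⟩
    refine ⟨⟨?_, ?_, ?_, ?_, ?_, ?_, ?_, ?_, ?_, ?_⟩, rfl, ?_, ?_, ?_⟩ <;>
      first
        | (exact fun h => h 0 le_rfl)
        | (rintro t ⟨h | h, -⟩ t' ht' <;>
            first | exact h t le_rfl | exact (h t le_rfl) trivial)
        | (simp <;> intros <;> omega)
  · -- bg only: no secretion, no releaseL, hyper everywhere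
    refine ⟨ℤ, inferInstance, 0, (fun _ => False), (fun _ => False), (fun _ => True),
      (fun _ => False), (fun _ => False), (fun _ => False), (fun _ => False),
      (fun _ => False), (fun t => t = 0), (fun _ => False), (fun _ => False),
      (fun _ => False), (fun _ => False), (fun _ => True), ?_⟩
    refine ⟨⟨?_, ?_, ?_, ?_, ?_, ?_, ?_, ?_, ?_, ?_⟩, rfl, ?_, ?_, ?_⟩ <;>
      first
        | (exact fun h => h 0 le_rfl)
        | (simp <;> intros <;> omega)
  · -- empty
    refine ⟨ℤ, inferInstance, 0, (fun _ => False), (fun _ => False), (fun _ => False),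
      (fun _ => False), (fun _ => False), (fun _ => False), (fun _ => False),
      (fun _ => False), (fun t => t = 0), (fun _ => False), (fun _ => False),
      (fun _ => False), (fun _ => False), (fun _ => True), ?_⟩
    refine ⟨⟨?_, ?_, ?_, ?_, ?_, ?_, ?_, ?_, ?_, ?_⟩, rfl, ?_, ?_⟩ <;>
      first
        | (exact fun h => h 0 le_rfl)
        | (simp <;> intros <;> omega)
end

section
/- For the patient description P = {capE t0, (H hyper) t0} and intention N = (∀ t' ≥ t0, normo t' ∨ hypo t'), the treatment {su, bg, insulin} recommended by the guideline is NOT subset-minimal: its proper subset {insulin} is itself a treatment, i.e., (i) there exist a linear order T, t0 ∈ T and predicates satisfying B_DM2 together with capE t0, (H hyper) t0 and (G insulin) t0 (criterion M1 for {insulin}), and (ii) for every linear order T, t0 ∈ T and predicates satisfying B_DM2 together with capE t0, (H hyper) t0 and (G insulin) t0, the intention ∀ t' ≥ t0, normo t' ∨ hypo t' holds (criterion M2 for {insulin}). -/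
def WitnessInsulinOnly (T : Type) [LinearOrder T] (t0 : T)
    (insulin su bg uptakeL uptakeP releaseL secretion capS capN capE qiHigh normo hypo hyper : T → Prop) : Prop :=
  BDM2 insulin su bg uptakeL uptakeP releaseL secretion capS capN capE qiHigh normo hypo hyper ∧
  capE t0 ∧
  (∀ t' < t0, hyper t') ∧
  (∀ t' ≥ t0, insulin t')

theorem stmt9 :
    (∃ (T : Type) (inst : LinearOrder T) (t0 : T)
    (insulin su bg uptakeL uptakeP releaseL secretion capS capN capE qiHigh normo hypo hyper : T → Prop),
    @WitnessInsulinOnly T inst t0 insulin su bg uptakeL uptakeP releaseL secretion capS capN capE qiHigh normo hypo hyper) ∧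
    (∀ (T : Type) [LinearOrder T] (t0 : T)
      (insulin su bg uptakeL uptakeP releaseL secretion capS capN capE qiHigh normo hypo hyper : T → Prop),
      BDM2 insulin su bg uptakeL uptakeP releaseL secretion capS capN capE qiHigh normo hypo hyper →
      capE t0 → (∀ t' < t0, hyper t') → (∀ t' ≥ t0, insulin t') →
      ∀ t' ≥ t0, normo t' ∨ hypo t') := by
  constructor
  · refine ⟨ℤ, inferInstance, 0, fun _ => True, fun _ => False, fun _ => False,
      fun _ => True, fun _ => True, fun _ => False, fun _ => False, fun _ => False,
      fun _ => False, fun t => 0 ≤ t, fun _ => False, fun t => 0 ≤ t, fun _ => False,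
      fun t => t < 0, ?_⟩
    refine ⟨⟨?_, ?_, ?_, ?_, ?_, ?_, ?_, ?_, ?_, ?_⟩, ?_, ?_, ?_⟩
    · intro t _ t' _; exact ⟨trivial, trivial⟩
    · intro t t' _ _ h; exact h
    · intro t h; exact absurd (h.1 t le_rfl) (by simp)
    · intro t h; exact absurd (h t le_rfl) (by simp)
    · intro t h; exact absurd h.2.1 (by simp)
    · intro t h; exact absurd h.2.1 (by simp)
    · intro t h; exact absurd h.2.1 (by simp)
    · intro t h t' ht'; left; have := h.2.2.1; omega
    · intro t; constructor
      · by_cases h : 0 ≤ t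
        · exact Or.inl h
        · exact Or.inr (Or.inr (by omega))
      · refine ⟨?_, ?_, ?_⟩ <;> rintro ⟨a, b⟩ <;> first | exact b | exact a | omega
    · intro t; refine ⟨?_, ?_, ?_⟩ <;> rintro ⟨a, b⟩ <;> simp_all
    · exact le_rfl
    · intro t ht; exact ht
    · intro t _; trivial
  · intro T _ t0 insulin su bg uptakeL uptakeP releaseL secretion capS capN capE qiHigh normo hypo hyper hB hE hH hI
    obtain ⟨h1, _, _, _, _, _, _, h8, _⟩ := hB
    have hu := h1 t0 hI
    exact h8 t0 ⟨fun t' ht' => (hu t' ht').1, fun t' ht' => (hu t' ht').2, hE, hH⟩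
end
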